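/- With p_n(x) = (−1)^n e^x A^n(e^{−x}), the derivative satisfies p_n′(x) = −Σ_{k=0}^{n−1} C(2n, 2k)·p_k(x) for every n ≥ 1. -/

import Mathlib

open Real

/-- The operator `(A f)(x) = x² f(x) − x (x f′(x))′`. -/
noncomputable def opA (f : ℝ → ℝ) : ℝ → ℝ :=
  fun x => x^2 * f x - x * deriv (fun y => y * deriv f y) x

/-- `p_n(x) = (−1)^n e^x (Aⁿ e^{−x})(x)`. -/
noncomputable def p (n : ℕ) (x : ℝ) : ℝ :=
  (-1:ℝ)^n * Real.exp x * (opA^[n] (fun y => Real.exp (-y))) x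

/-!
Conjugating `A` by `e^{-x}` turns `p_n` into the polynomials `P_n` of `pPoly`. Their exponential
generating function `∑ P_n t^{2n}/(2n)!` is `exp (x (1 - cosh t))`, so next to
`P_n' = -∑_{k<n} C(2n,2k) P_k` (coefficients of `∂ₓ = (1 - cosh t) ·`) they satisfy the companion
identity `P_{n+1} = -x ∑_k C(2n+1,2k) P_k` (coefficients of `∂ₜ = -x sinh t ·`), and the two are
proved together by strong induction. Differentiating `∑_k C(N,2k) P_k` with the first identity and
regrouping by trinomial revision produces the weights `∑_i C(N-2j,2i)`; these equal the odd weights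
`∑_i C(N-2j,2i+1)` except when `N = 2j`, and after multiplication by `x` the odd-weighted sum
collapses by the companion identity.
-/

open Finset Polynomial

section ChooseSum

variable {M : Type*} [AddCommMonoid M]

def chooseSum (r N : ℕ) (f : ℕ → M) : M :=
  ∑ k ∈ range (N + 1), N.choose (2 * k + r) • f k

theorem chooseSum_eq_sum_range {r N n : ℕ} (f : ℕ → M) (h : N < 2 * n + r) :
    chooseSum r N f = ∑ k ∈ range n, N.choose (2 * k + r) • f k := by
  have hvanish : ∀ k ≥ min n (N + 1), N.choose (2 * k + r) • f k = 0 := fun k hk => by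
    rw [Nat.choose_eq_zero_of_lt (by omega), zero_smul]
  rw [chooseSum, eventually_constant_sum hvanish (min_le_right _ _),
    eventually_constant_sum hvanish (min_le_left _ _)]

theorem chooseSum_congr {r N : ℕ} {f g : ℕ → M} (h : ∀ k, 2 * k + r ≤ N → f k = g k) :
    chooseSum r N f = chooseSum r N g := by
  refine sum_congr rfl fun k _ => ?_
  by_cases hk : 2 * k + r ≤ N
  · rw [h k hk]
  · rw [Nat.choose_eq_zero_of_lt (by omega), zero_smul, zero_smul]

theorem chooseSum_one_succ (N : ℕ) (f : ℕ → M) :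
    chooseSum 1 (N + 1) f = chooseSum 0 N f + chooseSum 1 N f := by
  rw [chooseSum_eq_sum_range f (n := N + 1) (by omega), chooseSum, chooseSum, ← sum_add_distrib]
  exact sum_congr rfl fun k _ => by rw [Nat.choose_succ_succ', add_smul, add_zero]

theorem chooseSum_zero_succ (N : ℕ) (f : ℕ → M) :
    chooseSum 0 (N + 1) f = chooseSum 0 N f + chooseSum 1 N (fun k => f (k + 1)) := by
  have hpascal : ∀ k, (N + 1).choose (2 * (k + 1)) = N.choose (2 * k + 1) + N.choose (2 * (k + 1)) :=
    fun k => Nat.choose_succ_succ' N (2 * k + 1)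
  have heven : chooseSum 0 N f = ∑ k ∈ range (N + 1), N.choose (2 * (k + 1)) • f (k + 1) + f 0 := by
    rw [chooseSum_eq_sum_range f (n := N + 2) (by omega), sum_range_succ']
    simp
  rw [heven, chooseSum, chooseSum, sum_range_succ']
  simp only [add_zero, hpascal, add_smul, sum_add_distrib, mul_zero, Nat.choose_zero_right, one_smul]
  abel

theorem chooseSum_even_succ_eq_odd (n : ℕ) :
    chooseSum 0 (n + 1) (fun _ => 1) = chooseSum 1 (n + 1) (fun _ => 1) := by
  rw [chooseSum_zero_succ, chooseSum_one_succ, add_comm]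

theorem chooseSum_chooseSum {r : ℕ} (hr : r ≤ 1) (N : ℕ) (f : ℕ → M) :
    chooseSum r N (fun m => chooseSum 0 (2 * m + r) f) =
      chooseSum 0 N (fun j => chooseSum r (N - 2 * j) (fun _ => 1) • f j) := by
  calc chooseSum r N (fun m => chooseSum 0 (2 * m + r) f)
      = ∑ m ∈ Ico 0 (N + 1), ∑ j ∈ Ico 0 (m + 1),
          (N.choose (2 * m + r) * (2 * m + r).choose (2 * j)) • f j := by
        simp only [← range_eq_Ico, mul_smul, ← smul_sum]
        exact sum_congr rfl fun m _ => by
          dsimp only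
          rw [chooseSum_eq_sum_range f (n := m + 1) (by omega)]
          simp
    _ = ∑ j ∈ Ico 0 (N + 1), ∑ i ∈ range (N + 1 - j),
          (N.choose (2 * (j + i) + r) * (2 * (j + i) + r).choose (2 * j)) • f j := by
        rw [← sum_Ico_Ico_comm]
        exact sum_congr rfl fun j _ => sum_Ico_eq_sum_range _ _ _
    _ = ∑ j ∈ range (N + 1), ∑ i ∈ range (N + 1 - j),
          (N.choose (2 * j) * (N - 2 * j).choose (2 * i + r)) • f j := by
        rw [← range_eq_Ico]
        refine sum_congr rfl fun j _ => sum_congr rfl fun i _ => ?_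
        rw [Nat.choose_mul (by omega), show 2 * (j + i) + r - 2 * j = 2 * i + r by omega]
    _ = _ := by
        refine sum_congr rfl fun j hj => ?_
        dsimp only
        rw [chooseSum_eq_sum_range _ (n := N + 1 - j) (by simp at hj; omega), sum_smul, smul_sum]
        simp [mul_smul]

theorem chooseSum_two_mul_add_one_weight (n : ℕ) (f : ℕ → M) :
    chooseSum 0 (2 * n + 1) (fun j => chooseSum 0 (2 * n + 1 - 2 * j) (fun _ => 1) • f j) =
      chooseSum 0 (2 * n + 1) (fun j => chooseSum 1 (2 * n + 1 - 2 * j) (fun _ => 1) • f j) :=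
  chooseSum_congr fun j hj => by
    rw [show 2 * n + 1 - 2 * j = 2 * n - 2 * j + 1 by omega, chooseSum_even_succ_eq_odd]

theorem chooseSum_two_mul_weight (n : ℕ) (f : ℕ → M) :
    chooseSum 0 (2 * n) (fun j => chooseSum 0 (2 * n - 2 * j) (fun _ => 1) • f j) =
      chooseSum 0 (2 * n) (fun j => chooseSum 1 (2 * n - 2 * j) (fun _ => 1) • f j) + f n := by
  rw [chooseSum_eq_sum_range _ (n := n + 1) (by omega), chooseSum_eq_sum_range _ (n := n + 1) (by omega),
    sum_range_succ, sum_range_succ, add_assoc]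
  congr 1
  · refine sum_congr rfl fun j hj => ?_
    rw [mem_range] at hj
    rw [show 2 * n - 2 * j = 2 * n - 2 * j - 1 + 1 by omega, chooseSum_even_succ_eq_odd]
  · simp [chooseSum]

theorem map_chooseSum {M' F : Type*} [AddCommMonoid M'] [FunLike F M M'] [AddMonoidHomClass F M M']
    (g : F) (r N : ℕ) (f : ℕ → M) : g (chooseSum r N f) = chooseSum r N (fun k => g (f k)) := by
  simp only [chooseSum, map_sum, map_nsmul]

end ChooseSum

section ChooseSumGroup

variable {M : Type*} [AddCommGroup M]

theorem chooseSum_neg (r N : ℕ) (f : ℕ → M) :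
    chooseSum r N (fun k => -f k) = -chooseSum r N f := by
  simp only [chooseSum, smul_neg, sum_neg_distrib]

theorem chooseSum_sub (r N : ℕ) (f g : ℕ → M) :
    chooseSum r N (fun k => f k - g k) = chooseSum r N f - chooseSum r N g := by
  simp only [chooseSum, smul_sub, sum_sub_distrib]

end ChooseSumGroup

section PPoly

variable {R : Type*} [CommRing R]

noncomputable def opAPoly (q : R[X]) : R[X] :=
  X ^ 2 * derivative q - X * derivative (X * (derivative q - q))

noncomputable def pPoly (R : Type*) [CommRing R] : ℕ → R[X]
  | 0 => 1
  | n + 1 => -opAPoly (pPoly R n)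

theorem derivative_chooseSum_pPoly {N : ℕ}
    (hM : ∀ k, 2 * k ≤ N → derivative (pPoly R k) = pPoly R k - chooseSum 0 (2 * k) (pPoly R)) :
    derivative (chooseSum 0 N (pPoly R)) = chooseSum 0 N (pPoly R) -
      chooseSum 0 N (fun j => chooseSum 0 (N - 2 * j) (fun _ => 1) • pPoly R j) := by
  rw [← chooseSum_chooseSum zero_le_one, ← chooseSum_sub, map_chooseSum]
  exact chooseSum_congr fun k hk => hM k hk

theorem X_mul_chooseSum_pPoly {N : ℕ}
    (hC : ∀ m, 2 * m + 1 ≤ N → pPoly R (m + 1) = -(X * chooseSum 0 (2 * m + 1) (pPoly R))) :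
    X * chooseSum 0 N (fun j => chooseSum 1 (N - 2 * j) (fun _ => 1) • pPoly R j) =
      -chooseSum 1 N (fun m => pPoly R (m + 1)) := by
  rw [← chooseSum_chooseSum le_rfl, ← AddMonoidHom.coe_mulLeft, map_chooseSum, ← chooseSum_neg]
  exact chooseSum_congr fun m hm => by rw [hC m hm, neg_neg]; rfl

theorem pPoly_succ_eq (n : ℕ)
    (hM : ∀ k ≤ n, derivative (pPoly R k) = pPoly R k - chooseSum 0 (2 * k) (pPoly R))
    (hC : ∀ m < n, pPoly R (m + 1) = -(X * chooseSum 0 (2 * m + 1) (pPoly R))) :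
    pPoly R (n + 1) = -(X * chooseSum 0 (2 * n + 1) (pPoly R)) := by
  have hDC := derivative_chooseSum_pPoly (N := 2 * n) fun k hk => hM k (by omega)
  have hXV := X_mul_chooseSum_pPoly (N := 2 * n) fun m hm => hC m (by omega)
  rw [chooseSum_two_mul_weight] at hDC
  rw [chooseSum_zero_succ, pPoly, opAPoly]
  simp only [derivative_mul, derivative_sub, derivative_X, hM n le_rfl, hDC]
  linear_combination X * hXV

theorem derivative_pPoly_succ (n : ℕ)
    (hM : ∀ k ≤ n, derivative (pPoly R k) = pPoly R k - chooseSum 0 (2 * k) (pPoly R))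
    (hC : ∀ m ≤ n, pPoly R (m + 1) = -(X * chooseSum 0 (2 * m + 1) (pPoly R))) :
    derivative (pPoly R (n + 1)) = pPoly R (n + 1) - chooseSum 0 (2 * (n + 1)) (pPoly R) := by
  have hDC := derivative_chooseSum_pPoly (N := 2 * n + 1) fun k hk => hM k (by omega)
  have hXV := X_mul_chooseSum_pPoly (N := 2 * n + 1) fun m hm => hC m (by omega)
  rw [chooseSum_two_mul_add_one_weight] at hDC
  rw [hC n le_rfl, derivative_neg, derivative_mul, derivative_X, hDC,
    show 2 * (n + 1) = 2 * n + 1 + 1 by ring, chooseSum_zero_succ (2 * n + 1)]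
  linear_combination hXV

theorem derivative_pPoly_and_pPoly_succ (n : ℕ) :
    derivative (pPoly R n) = pPoly R n - chooseSum 0 (2 * n) (pPoly R) ∧
      pPoly R (n + 1) = -(X * chooseSum 0 (2 * n + 1) (pPoly R)) := by
  induction n using Nat.strong_induction_on with
  | _ n ih =>
    have hM : derivative (pPoly R n) = pPoly R n - chooseSum 0 (2 * n) (pPoly R) := by
      cases n with
      | zero => simp [pPoly, chooseSum]
      | succ n =>
        exact derivative_pPoly_succ n (fun k hk => (ih k (by omega)).1)
          fun m hm => (ih m (by omega)).2
    refine ⟨hM, pPoly_succ_eq n (fun k hk => ?_) fun m hm => (ih m hm).2⟩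
    rcases hk.lt_or_eq with hk | rfl
    exacts [(ih k hk).1, hM]

theorem derivative_pPoly (n : ℕ) :
    derivative (pPoly R n) = -∑ k ∈ range n, (2 * n).choose (2 * k) • pPoly R k := by
  rw [(derivative_pPoly_and_pPoly_succ n).1, chooseSum_eq_sum_range _ (n := n + 1) (by omega),
    sum_range_succ]
  simp

end PPoly

theorem deriv_eval_mul_exp_neg (q : ℝ[X]) :
    deriv (fun y => q.eval y * exp (-y)) = fun y => (derivative q - q).eval y * exp (-y) := by
  funext y
  have h : HasDerivAt (fun y => q.eval y * exp (-y)) _ y :=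
    (q.hasDerivAt y).mul (hasDerivAt_neg y).exp
  rw [h.deriv, eval_sub]
  ring

theorem opA_const_mul (c : ℝ) (f : ℝ → ℝ) : opA (fun y => c * f y) = fun y => c * opA f y := by
  funext x
  simp only [opA, deriv_const_mul_field', mul_left_comm _ c]
  ring

theorem opA_eval_mul_exp_neg (q : ℝ[X]) :
    opA (fun y => q.eval y * exp (-y)) = fun y => (opAPoly q).eval y * exp (-y) := by
  have hX : (fun y => y * ((derivative q - q).eval y * exp (-y))) =
      fun y => (X * (derivative q - q)).eval y * exp (-y) := by
    funext y
    rw [eval_mul, eval_X, mul_assoc]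
  funext x
  simp only [opA, deriv_eval_mul_exp_neg]
  rw [hX, deriv_eval_mul_exp_neg]
  simp only [opAPoly, eval_sub, eval_mul, eval_pow, eval_X]
  ring

theorem opA_iterate_exp_neg (n : ℕ) :
    opA^[n] (fun y => exp (-y)) = fun y => (-1) ^ n * ((pPoly ℝ n).eval y * exp (-y)) := by
  induction n with
  | zero => simp [pPoly]
  | succ n ih =>
    rw [Function.iterate_succ_apply', ih, opA_const_mul, opA_eval_mul_exp_neg]
    funext y
    rw [pPoly, eval_neg]
    ring

theorem p_eq_eval_pPoly (n : ℕ) (x : ℝ) : p n x = (pPoly ℝ n).eval x := by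
  have hsign : ((-1 : ℝ) ^ n) ^ 2 = 1 := by rw [← pow_mul, mul_comm, pow_mul]; norm_num
  have hexp : exp x * exp (-x) = 1 := by rw [← exp_add, add_neg_cancel, exp_zero]
  rw [p, opA_iterate_exp_neg]
  linear_combination (pPoly ℝ n).eval x * (((-1) ^ n) ^ 2 * hexp + hsign)

theorem p_deriv_general (n : ℕ) (x : ℝ) :
    deriv (p n) x = -∑ k ∈ Finset.range n, ((2*n).choose (2*k) : ℝ) * p k x := by
  rw [show p n = fun y => (pPoly ℝ n).eval y from funext (p_eq_eval_pPoly n), Polynomial.deriv,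
    derivative_pPoly, eval_neg, eval_finsetSum]
  simp [p_eq_eval_pPoly]

theorem p_deriv (n : ℕ) (hn : 1 ≤ n) (x : ℝ) :
    deriv (p n) x = -∑ k ∈ Finset.range n, ((2*n).choose (2*k) : ℝ) * p k x :=
  p_deriv_general n x
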